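/- Let φ be a tight inclusion of a persistence module M into a persistence module N over J, let a < t be elements of J, and assume N_t is finite-dimensional. Then dim Ṽ^M_t(a) − dim W̃^M_t(a) ≤ dim Ṽ^N_t(a) − dim W̃^N_t(a). (This is the key inequality showing that tight inclusions do not decrease the multiplicity of any right-infinite bar (a, sup J), hence induce inclusions of barcodes and persistence diagrams.) -/

import Mathlib

/-- A persistence module over a set `J ⊆ ℝ` of scales: a family of `F`-vector spaces
together with commuting linear bonding maps. -/
structure PersistenceModule (F : Type*) [Field F] (J : Set ℝ) where
  space : J → Type*
  [addCommGroup : ∀ r : J, AddCommGroup (space r)]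
  [module : ∀ r : J, Module F (space r)]
  bond : ∀ r r' : J, (r : ℝ) ≤ (r' : ℝ) → (space r →ₗ[F] space r')
  bond_refl : ∀ r : J, bond r r le_rfl = LinearMap.id
  bond_comp : ∀ (r r' r'' : J) (h : (r : ℝ) ≤ (r' : ℝ)) (h' : (r' : ℝ) ≤ (r'' : ℝ)),
    (bond r' r'' h').comp (bond r r' h) = bond r r'' (h.trans h')

attribute [instance] PersistenceModule.addCommGroup PersistenceModule.module

/-- An inclusion of persistence modules: a family of injective linear maps commuting
with the bonding maps. -/
structure PersistenceModule.Inclusion {F : Type*} [Field F] {J : Set ℝ}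
    (M N : PersistenceModule F J) where
  toFun : ∀ r : J, M.space r →ₗ[F] N.space r
  injective : ∀ r : J, Function.Injective (toFun r)
  comm : ∀ (r r' : J) (h : (r : ℝ) ≤ (r' : ℝ)),
    (toFun r').comp (M.bond r r' h) = (N.bond r r' h).comp (toFun r)

/-- An inclusion `φ` of persistence modules is *tight* if for all `r' < r` in `J`,
`φ_r(Im ρ^M_{r',r}) = (range φ_r) ∩ Im ρ^N_{r',r}`. -/
def PersistenceModule.Inclusion.Tight {F : Type*} [Field F] {J : Set ℝ}
    {M N : PersistenceModule F J} (φ : M.Inclusion N) : Prop :=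
  ∀ (r' r : J) (h : (r' : ℝ) < (r : ℝ)),
    (LinearMap.range (M.bond r' r h.le)).map (φ.toFun r) =
      LinearMap.range (φ.toFun r) ⊓ LinearMap.range (N.bond r' r h.le)

/-- `Ṽ^P_t(a) = ⋂_{s ∈ J, a < s < t} Im ρ^P_{s,t}`. -/
noncomputable def PersistenceModule.Vt {F : Type*} [Field F] {J : Set ℝ}
    (P : PersistenceModule F J) (a t : J) : Submodule F (P.space t) :=
  ⨅ s : J, ⨅ h : (a : ℝ) < (s : ℝ) ∧ (s : ℝ) < (t : ℝ),
    LinearMap.range (P.bond s t h.2.le)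

/-- `W̃^P_t(a) = Im ρ^P_{a,t} + (Ṽ^P_t(a) ∩ ⋂_{s ∈ J, s > t} ker ρ^P_{t,s})`. -/
noncomputable def PersistenceModule.Wt {F : Type*} [Field F] {J : Set ℝ}
    (P : PersistenceModule F J) (a t : J) (hat : (a : ℝ) < (t : ℝ)) :
    Submodule F (P.space t) :=
  LinearMap.range (P.bond a t hat.le) ⊔
    (P.Vt a t ⊓ ⨅ s : J, ⨅ h : (t : ℝ) < (s : ℝ), LinearMap.ker (P.bond t s h.le))

/-
Tightness says exactly that `φ_r` pulls `Im ρ^N_{r',r}` back to `Im ρ^M_{r',r}`. Every ingredient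
of `Ṽ_t(a)` and `W̃_t(a)` is an intersection of such images, or of their preimages under bonding
maps: `Im ρ_{a,t} + ker ρ_{t,s} = ρ_{t,s}⁻¹(Im ρ_{a,s})`, and since the kernels `ker ρ_{t,s}`
stabilise as `s ↓ t` in finite dimensions, `W̃_t(a) = ⋂_{s > t} ρ_{t,s}⁻¹(Im ρ_{a,s}) ∩ Ṽ_t(a)`.
Hence `φ_t⁻¹(Ṽ^N_t(a)) = Ṽ^M_t(a)` and `φ_t⁻¹(W̃^N_t(a)) = W̃^M_t(a)`, so `φ_t` embeds
`Ṽ^M_t(a) / W̃^M_t(a)` into `Ṽ^N_t(a) / W̃^N_t(a)`.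
-/

open Module Submodule LinearMap

theorem Directed.exists_eq_iInf {α ι : Type*} [CompleteLattice α] [WellFoundedLT α] [Nonempty ι]
    {f : ι → α} (hf : Directed (· ≥ ·) f) : ∃ i, f i = ⨅ j, f j := by
  obtain ⟨_, ⟨i, rfl⟩, hmin⟩ := wellFounded_lt.has_min (Set.range f) (Set.range_nonempty f)
  refine ⟨i, le_antisymm (le_iInf fun j => ?_) (iInf_le f i)⟩
  obtain ⟨k, hki, hkj⟩ := hf i j
  exact eq_of_le_of_not_lt hki (hmin _ ⟨k, rfl⟩) ▸ hkj

theorem Directed.sup_iInf_eq {α ι : Type*} [CompleteLattice α] [WellFoundedLT α]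
    {f : ι → α} (hf : Directed (· ≥ ·) f) (a : α) : a ⊔ ⨅ i, f i = ⨅ i, a ⊔ f i := by
  cases isEmpty_or_nonempty ι
  · simp [iInf_of_empty]
  obtain ⟨i, hi⟩ := hf.exists_eq_iInf
  exact le_antisymm (le_iInf fun j => sup_le_sup_left (iInf_le f j) a) (hi ▸ iInf_le _ i)

theorem Submodule.finrank_sub_finrank_inf_le {K V : Type*} [DivisionRing K] [AddCommGroup V]
    [Module K V] [FiniteDimensional K V] {A B C : Submodule K V} (hA : A ≤ C) (hB : B ≤ C) :
    (finrank K A : ℤ) - finrank K ↥(A ⊓ B) ≤ finrank K C - finrank K B := by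
  have hsup := Submodule.finrank_sup_add_finrank_inf_eq A B
  have hle := Submodule.finrank_mono (sup_le hA hB)
  omega

namespace PersistenceModule

variable {F : Type*} [Field F] {J : Set ℝ}

def Kt (P : PersistenceModule F J) (t : J) : Submodule F (P.space t) :=
  ⨅ s : J, ⨅ h : (t : ℝ) < (s : ℝ), ker (P.bond t s h.le)

section

variable (P : PersistenceModule F J)

theorem range_bond_le_Vt {a t : J} (hat : (a : ℝ) < t) : range (P.bond a t hat.le) ≤ P.Vt a t :=
  le_iInf₂ fun s hs => by
    rw [← P.bond_comp a s t hs.1.le hs.2.le]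
    exact range_comp_le_range _ _

theorem Wt_le_Vt {a t : J} (hat : (a : ℝ) < t) : P.Wt a t hat ≤ P.Vt a t :=
  sup_le (P.range_bond_le_Vt hat) inf_le_left

theorem Wt_eq_sup_Kt_inf_Vt {a t : J} (hat : (a : ℝ) < t) :
    P.Wt a t hat = (range (P.bond a t hat.le) ⊔ P.Kt t) ⊓ P.Vt a t := by
  rw [sup_inf_assoc_of_le _ (P.range_bond_le_Vt hat), inf_comm]
  rfl

theorem ker_bond_mono {t s s' : J} (hts : (t : ℝ) ≤ s) (hss' : (s : ℝ) ≤ s') :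
    ker (P.bond t s hts) ≤ ker (P.bond t s' (hts.trans hss')) := by
  rw [← P.bond_comp t s s' hts hss']
  exact ker_le_ker_comp _ _

theorem sup_Kt_eq_iInf {t : J} [IsArtinian F (P.space t)] (p : Submodule F (P.space t)) :
    p ⊔ P.Kt t = ⨅ s : J, ⨅ h : (t : ℝ) < s, p ⊔ ker (P.bond t s h.le) := by
  have hdir : Directed (· ≥ ·) fun s : {s : J // (t : ℝ) < s} => ker (P.bond t s s.2.le) := by
    intro s s'
    rcases le_total (s : ℝ) s' with h | h
    · exact ⟨s, le_rfl, P.ker_bond_mono _ h⟩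
    · exact ⟨s', P.ker_bond_mono _ h, le_rfl⟩
  simpa only [Kt, iInf_subtype'] using hdir.sup_iInf_eq p

theorem range_bond_sup_ker_bond {a t s : J} (hat : (a : ℝ) ≤ t) (hts : (t : ℝ) ≤ s) :
    range (P.bond a t hat) ⊔ ker (P.bond t s hts) =
      (range (P.bond a s (hat.trans hts))).comap (P.bond t s hts) := by
  rw [← P.bond_comp a t s hat hts, range_comp, comap_map_eq]

end

namespace Inclusion

variable {M N : PersistenceModule F J} {φ : M.Inclusion N}

theorem Tight.comap_range_bond (hφ : φ.Tight) {r' r : J} (h : (r' : ℝ) < r) :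
    (range (N.bond r' r h.le)).comap (φ.toFun r) = range (M.bond r' r h.le) := by
  rw [← comap_map_eq_of_injective (φ.injective r) (range (M.bond r' r h.le)), hφ r' r h,
    comap_inf, range_le_iff_comap.mp le_rfl, top_inf_eq]

theorem Tight.comap_Vt (hφ : φ.Tight) (a t : J) : (N.Vt a t).comap (φ.toFun t) = M.Vt a t := by
  simp only [Vt, comap_iInf]
  exact iInf_congr fun s => iInf_congr fun hs => hφ.comap_range_bond hs.2

theorem Tight.comap_range_bond_sup_ker_bond (hφ : φ.Tight) {a t s : J} (hat : (a : ℝ) < t)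
    (hts : (t : ℝ) ≤ s) :
    (range (N.bond a t hat.le) ⊔ ker (N.bond t s hts)).comap (φ.toFun t) =
      range (M.bond a t hat.le) ⊔ ker (M.bond t s hts) := by
  rw [N.range_bond_sup_ker_bond, M.range_bond_sup_ker_bond, ← comap_comp, ← φ.comm, comap_comp,
    hφ.comap_range_bond (hat.trans_le hts)]

theorem Tight.comap_Wt (hφ : φ.Tight) {a t : J} (hat : (a : ℝ) < t) [IsArtinian F (M.space t)]
    [IsArtinian F (N.space t)] : (N.Wt a t hat).comap (φ.toFun t) = M.Wt a t hat := by
  simp only [Wt_eq_sup_Kt_inf_Vt, sup_Kt_eq_iInf, comap_inf, comap_iInf, hφ.comap_Vt,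
    hφ.comap_range_bond_sup_ker_bond hat]

end Inclusion

end PersistenceModule

/-- Let `φ` be a tight inclusion of a persistence module `M` into a
persistence module `N` over `J`, let `a < t` be elements of `J`, and assume `N_t` is
finite-dimensional. Then
`dim Ṽ^M_t(a) − dim W̃^M_t(a) ≤ dim Ṽ^N_t(a) − dim W̃^N_t(a)`,
i.e. tight inclusions do not decrease the multiplicity of right-infinite bars. -/
theorem multiplicity_infinite_bar_le_of_tight
    {F : Type*} [Field F] {J : Set ℝ} {M N : PersistenceModule F J}
    (φ : M.Inclusion N) (hφ : φ.Tight)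
    (a t : J) (hat : (a : ℝ) < (t : ℝ))
    [FiniteDimensional F (N.space t)] :
    (Module.finrank F (M.Vt a t) : ℤ) - Module.finrank F (M.Wt a t hat) ≤
      (Module.finrank F (N.Vt a t) : ℤ) - Module.finrank F (N.Wt a t hat) := by
  have hinj := φ.injective t
  have : FiniteDimensional F (M.space t) := .of_injective (φ.toFun t) hinj
  have hVt : (M.Vt a t).map (φ.toFun t) ≤ N.Vt a t := hφ.comap_Vt a t ▸ map_comap_le _ _
  have hWt : (M.Vt a t).map (φ.toFun t) ⊓ N.Wt a t hat = (M.Wt a t hat).map (φ.toFun t) := by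
    rw [← hφ.comap_Wt hat, ← hφ.comap_Vt, map_comap_eq, map_comap_eq, inf_assoc,
      inf_eq_right.2 (N.Wt_le_Vt hat)]
  calc (finrank F (M.Vt a t) : ℤ) - finrank F (M.Wt a t hat)
      = finrank F ((M.Vt a t).map (φ.toFun t)) -
          finrank F ↥((M.Vt a t).map (φ.toFun t) ⊓ N.Wt a t hat) := by
        rw [hWt, (equivMapOfInjective _ hinj (M.Vt a t)).finrank_eq,
          (equivMapOfInjective _ hinj (M.Wt a t hat)).finrank_eq]
    _ ≤ _ := finrank_sub_finrank_inf_le hVt (N.Wt_le_Vt hat)
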